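/- arXiv:1908.00938 — 5 statements merged into one kernel-verified Lean document; each statement's English description precedes it below -/
import Mathlib

section
/- Let t ↦ (ρ(t), φ(t), u(t), v(t)) be a solution of the Hamiltonian system with the underwater-bank Hamiltonian on which v(t) ≡ γ and ℋ ≡ γ/h for constants γ ≠ 0 and h > 0, and set 𝔥 = h². Then for every t the radial variable satisfies the autonomous equation (ρ(t)·ρ̇(t))²·(ρ(t)² + a)² = (ρ(t)² + b)·(ρ(t)²(ρ(t)² + a) − (ρ(t)² + b)·𝔥). -/
open Real

/-- The underwater-bank Hamiltonian in polar coordinates: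
`ℋ(ρ, φ, u, v) = √(u² + v²/ρ²) · √((ρ² + b)/(ρ² + a))`. -/
noncomputable def bankH (a b ρ φ u v : ℝ) : ℝ :=
  Real.sqrt (u ^ 2 + v ^ 2 / ρ ^ 2) * Real.sqrt ((ρ ^ 2 + b) / (ρ ^ 2 + a))

theorem hasDerivAt_sqrt_sq_add_mul_const {c k x : ℝ} (hx : 0 < x ^ 2 + c) :
    HasDerivAt (fun y => √(y ^ 2 + c) * k) (x / √(x ^ 2 + c) * k) x := by
  have hsq : HasDerivAt (fun y : ℝ => y ^ 2 + c) (2 * x) x := by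
    simpa using (hasDerivAt_pow 2 x).add_const c
  exact ((hsq.sqrt hx.ne').mul_const k).congr_deriv (by field_simp)

theorem hasDerivAt_bankH_momentum {a b ρ φ u v : ℝ} (hN : 0 < u ^ 2 + v ^ 2 / ρ ^ 2) :
    HasDerivAt (fun u' => bankH a b ρ φ u' v)
      (u / √(u ^ 2 + v ^ 2 / ρ ^ 2) * √((ρ ^ 2 + b) / (ρ ^ 2 + a))) u :=
  hasDerivAt_sqrt_sq_add_mul_const hN

/-- With `N = u² + v²/ρ²` and `K = (ρ² + b)/(ρ² + a)`, the left side is `ρ² u² K (ρ² + a)² / N`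
and the energy level gives `N K = v²/h²`; substituting `u² = N - v²/ρ²` leaves a polynomial
identity. -/
theorem radial_momentum_identity {a b ρ φ u v h : ℝ} (hb : 0 < b) (hab : b < a) (hρ : ρ ≠ 0)
    (hh : h ≠ 0) (hN : 0 < u ^ 2 + v ^ 2 / ρ ^ 2) (hH : bankH a b ρ φ u v = v / h) :
    (ρ * (u / √(u ^ 2 + v ^ 2 / ρ ^ 2) * √((ρ ^ 2 + b) / (ρ ^ 2 + a)))) ^ 2 * (ρ ^ 2 + a) ^ 2
      = (ρ ^ 2 + b) * (ρ ^ 2 * (ρ ^ 2 + a) - (ρ ^ 2 + b) * h ^ 2) := by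
  have hA : 0 < ρ ^ 2 + a := by nlinarith [sq_nonneg ρ]
  have hK : 0 ≤ (ρ ^ 2 + b) / (ρ ^ 2 + a) := by positivity
  have hNK : (u ^ 2 + v ^ 2 / ρ ^ 2) * ((ρ ^ 2 + b) / (ρ ^ 2 + a)) = (v / h) ^ 2 := by
    rw [← hH, bankH, mul_pow, sq_sqrt hN.le, sq_sqrt hK]
  have hN' : u ^ 2 * ρ ^ 2 + v ^ 2 ≠ 0 := by
    have hNρ : u ^ 2 * ρ ^ 2 + v ^ 2 = (u ^ 2 + v ^ 2 / ρ ^ 2) * ρ ^ 2 := by field_simp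
    rw [hNρ]
    positivity
  rw [mul_pow, div_mul_eq_mul_div, div_pow, mul_pow, sq_sqrt hN.le, sq_sqrt hK]
  field_simp at hNK ⊢
  linear_combination hNK

theorem bank_radial_autonomous_equation_general
    (a b : ℝ) (hb : 0 < b) (hab : b < a)
    (γ h : ℝ) (hγ : γ ≠ 0) (hh : 0 < h)
    (ρ φ u v : ℝ → ℝ)
    (hρpos : ∀ t, 0 < ρ t)
    (hρ : ∀ t, HasDerivAt ρ (deriv (fun u' => bankH a b (ρ t) (φ t) u' (v t)) (u t)) t)
    (hvconst : ∀ t, v t = γ)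
    (hHconst : ∀ t, bankH a b (ρ t) (φ t) (u t) (v t) = γ / h)
    (𝔥 : ℝ) (h𝔥 : 𝔥 = h ^ 2) :
    ∀ t : ℝ,
      (ρ t * deriv ρ t) ^ 2 * (ρ t ^ 2 + a) ^ 2
        = (ρ t ^ 2 + b) * (ρ t ^ 2 * (ρ t ^ 2 + a) - (ρ t ^ 2 + b) * 𝔥) := by
  intro t
  have hN : 0 < u t ^ 2 + v t ^ 2 / ρ t ^ 2 := by
    have hρt := hρpos t
    rw [hvconst t]
    positivity
  have hH : bankH a b (ρ t) (φ t) (u t) (v t) = v t / h := by rw [hHconst t, hvconst t]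
  rw [(hρ t).deriv, (hasDerivAt_bankH_momentum hN).deriv, h𝔥]
  exact radial_momentum_identity hb hab (hρpos t).ne' hh.ne' hN hH

/-- On a solution of the underwater-bank Hamiltonian system
with `v ≡ γ` and `ℋ ≡ γ/h` (`γ ≠ 0`, `h > 0`, `𝔥 = h²`), the radial variable
satisfies the autonomous equation
`(ρ·ρ̇)²·(ρ² + a)² = (ρ² + b)·(ρ²(ρ² + a) − (ρ² + b)·𝔥)`. -/
theorem bank_radial_autonomous_equation
    (a b : ℝ) (hb : 0 < b) (hab : b < a)
    (γ h : ℝ) (hγ : γ ≠ 0) (hh : 0 < h)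
    (ρ φ u v : ℝ → ℝ)
    (hρpos : ∀ t, 0 < ρ t)
    (hne : ∀ t, (u t, v t) ≠ (0, 0))
    (hρ : ∀ t, HasDerivAt ρ (deriv (fun u' => bankH a b (ρ t) (φ t) u' (v t)) (u t)) t)
    (hφ : ∀ t, HasDerivAt φ (deriv (fun v' => bankH a b (ρ t) (φ t) (u t) v') (v t)) t)
    (hu : ∀ t, HasDerivAt u (-(deriv (fun ρ' => bankH a b ρ' (φ t) (u t) (v t)) (ρ t))) t)
    (hv : ∀ t, HasDerivAt v (-(deriv (fun φ' => bankH a b (ρ t) φ' (u t) (v t)) (φ t))) t)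
    (hvconst : ∀ t, v t = γ)
    (hHconst : ∀ t, bankH a b (ρ t) (φ t) (u t) (v t) = γ / h)
    (𝔥 : ℝ) (h𝔥 : 𝔥 = h ^ 2) :
    ∀ t : ℝ,
      (ρ t * deriv ρ t) ^ 2 * (ρ t ^ 2 + a) ^ 2
        = (ρ t ^ 2 + b) * (ρ t ^ 2 * (ρ t ^ 2 + a) - (ρ t ^ 2 + b) * 𝔥) :=
  bank_radial_autonomous_equation_general a b hb hab γ h hγ hh ρ φ u v hρpos hρ hvconst hHconst 𝔥 h𝔥
end

section
/- For all real numbers a, b, 𝔥 and all real z, the polynomial identity 4(z − δ)³ − α(z − δ) − β = 4(z − a + b)·(z(z − a) − 𝔥(z − a + b)) holds, where δ, α, β are the bank constants. Consequently the substitution s = ρ² + a − δ reduces the radial quartic (ρ² + b)(ρ²(ρ² + a) − (ρ² + b)𝔥) of the underwater-bank problem to the canonical Weierstrass cubic 4s³ − αs − β. -/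
/-- The bank constant `δ = (𝔥 + 2a − b)/3`. -/
noncomputable def bankDelta (a b 𝔥 : ℝ) : ℝ := (𝔥 + 2 * a - b) / 3

/-- The bank constant `α = (4/3)(𝔥² − 2(a − 2b)𝔥 + a² − ab + b²)`. -/
noncomputable def bankAlpha (a b 𝔥 : ℝ) : ℝ :=
  (4 / 3) * (𝔥 ^ 2 - 2 * (a - 2 * b) * 𝔥 + a ^ 2 - a * b + b ^ 2)

/-- The bank constant
`β = (4/27)(𝔥 − a + 2b)(2𝔥² − 4(a − 2b)𝔥 + (2a − b)(a + b))`. -/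
noncomputable def bankBeta (a b 𝔥 : ℝ) : ℝ :=
  (4 / 27) * (𝔥 - a + 2 * b) * (2 * 𝔥 ^ 2 - 4 * (a - 2 * b) * 𝔥 + (2 * a - b) * (a + b))

/-- For all real `a, b, 𝔥` and all real `z`, the polynomial
identity `4(z − δ)³ − α(z − δ) − β = 4(z − a + b)·(z(z − a) − 𝔥(z − a + b))`
holds, where `δ, α, β` are the bank constants.  Consequently the substitution
`s = ρ² + a − δ` reduces the radial quartic
`(ρ² + b)(ρ²(ρ² + a) − (ρ² + b)𝔥)` of the underwater-bank problem to the
canonical Weierstrass cubic `4s³ − αs − β` (up to the factor 4 below). -/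
theorem bank_weierstrass_reduction (a b 𝔥 : ℝ) :
    (∀ z : ℝ,
      4 * (z - bankDelta a b 𝔥) ^ 3 - bankAlpha a b 𝔥 * (z - bankDelta a b 𝔥) - bankBeta a b 𝔥
        = 4 * (z - a + b) * (z * (z - a) - 𝔥 * (z - a + b))) ∧
    (∀ ρ : ℝ,
      4 * ((ρ ^ 2 + b) * (ρ ^ 2 * (ρ ^ 2 + a) - (ρ ^ 2 + b) * 𝔥))
        = 4 * (ρ ^ 2 + a - bankDelta a b 𝔥) ^ 3
          - bankAlpha a b 𝔥 * (ρ ^ 2 + a - bankDelta a b 𝔥) - bankBeta a b 𝔥) := by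
  constructor <;> intro z <;>
  simp only [bankDelta, bankAlpha, bankBeta] <;> ring
end

section
/- (Radial part of Theorem 1, verification form.) Fix a > b > 0 and 𝔥 > 0, and let δ, α, β be the bank constants. Let g : I → ℝ be differentiable on an interval I with g′(p)² = 4g(p)³ − αg(p) − β and g(p) + δ − a > 0 for all p ∈ I, and let 𝔭 : J → I be differentiable with 𝔭̇(t) = 1/(g(𝔭(t)) + δ) for all t ∈ J (this is the derivative relation defined by the transcendental equation t − t₀ = δ(𝔭 − 𝔭₀) − ζ(𝔭) + ζ(𝔭₀)). Then ρ(t) := √(g(𝔭(t)) + δ − a) satisfies the radial equation (ρ(t)·ρ̇(t))²·(ρ(t)² + a)² = (ρ(t)² + b)·(ρ(t)²(ρ(t)² + a) − (ρ(t)² + b)·𝔥) for all t ∈ J. -/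
set_option maxHeartbeats 1000000 in
private lemma bank_aux (a b 𝔥 G D : ℝ) (h : G + bankDelta a b 𝔥 ≠ 0)
    (hode : D ^ 2 = 4 * G ^ 3 - bankAlpha a b 𝔥 * G - bankBeta a b 𝔥) :
    (D / (2 * (G + bankDelta a b 𝔥))) ^ 2 * (G + bankDelta a b 𝔥 - a + a) ^ 2
      = (G + bankDelta a b 𝔥 - a + b) *
        ((G + bankDelta a b 𝔥 - a) * (G + bankDelta a b 𝔥 - a + a)
          - (G + bankDelta a b 𝔥 - a + b) * 𝔥) := by
  have hG : G + bankDelta a b 𝔥 - a + a = G + bankDelta a b 𝔥 := by ring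
  rw [hG]
  have key : (D / (2 * (G + bankDelta a b 𝔥))) ^ 2 * (G + bankDelta a b 𝔥) ^ 2
      = D ^ 2 / 4 := by
    field_simp
    ring
  rw [key, hode]
  simp only [bankAlpha, bankBeta, bankDelta]
  ring

/-- (Radial part of Theorem 1, verification form.)
Fix `a > b > 0`, `𝔥 > 0`, and let `δ, α, β` be the bank constants.  Let
`g : I → ℝ` be differentiable on an interval `I` with
`g′(p)² = 4g(p)³ − αg(p) − β` and `g(p) + δ − a > 0` on `I`, and let
`𝔭 : J → I` be differentiable with `𝔭̇(t) = 1/(g(𝔭(t)) + δ)` (the derivative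
relation defined by the transcendental equation
`t − t₀ = δ(𝔭 − 𝔭₀) − ζ(𝔭) + ζ(𝔭₀)`).  Then `ρ(t) := √(g(𝔭(t)) + δ − a)`
satisfies `(ρρ̇)²(ρ² + a)² = (ρ² + b)(ρ²(ρ² + a) − (ρ² + b)𝔥)` on `J`. -/
theorem bank_radial_verification
    (a b 𝔥 : ℝ) (hb : 0 < b) (hab : b < a) (h𝔥 : 0 < 𝔥)
    (I J : Set ℝ) (hI : I.OrdConnected) (hJ : J.OrdConnected)
    (g : ℝ → ℝ)
    (hgdiff : ∀ p ∈ I, DifferentiableAt ℝ g p)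
    (hgode : ∀ p ∈ I,
      (deriv g p) ^ 2 = 4 * (g p) ^ 3 - bankAlpha a b 𝔥 * g p - bankBeta a b 𝔥)
    (hgpos : ∀ p ∈ I, 0 < g p + bankDelta a b 𝔥 - a)
    (𝔭 : ℝ → ℝ) (h𝔭mem : ∀ t ∈ J, 𝔭 t ∈ I)
    (h𝔭 : ∀ t ∈ J, HasDerivAt 𝔭 (1 / (g (𝔭 t) + bankDelta a b 𝔥)) t) :
    let ρ : ℝ → ℝ := fun s => Real.sqrt (g (𝔭 s) + bankDelta a b 𝔥 - a)
    ∀ t ∈ J,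
      (ρ t * deriv ρ t) ^ 2 * (ρ t ^ 2 + a) ^ 2
        = (ρ t ^ 2 + b) * (ρ t ^ 2 * (ρ t ^ 2 + a) - (ρ t ^ 2 + b) * 𝔥) := by
  intro ρ t ht
  have hpI := h𝔭mem t ht
  have hu : 0 < g (𝔭 t) + bankDelta a b 𝔥 - a := hgpos _ hpI
  have hua : 0 < g (𝔭 t) + bankDelta a b 𝔥 := by linarith
  -- derivative of the inner function s ↦ g (𝔭 s) + δ - a
  have hinner : HasDerivAt (fun s => g (𝔭 s) + bankDelta a b 𝔥 - a)
      (deriv g (𝔭 t) * (1 / (g (𝔭 t) + bankDelta a b 𝔥))) t := by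
    have hg : HasDerivAt g (deriv g (𝔭 t)) (𝔭 t) := (hgdiff _ hpI).hasDerivAt
    exact ((hg.comp t (h𝔭 t ht)).add_const (bankDelta a b 𝔥)).sub_const a
  have hsq : HasDerivAt ρ
      ((deriv g (𝔭 t) * (1 / (g (𝔭 t) + bankDelta a b 𝔥))) /
        (2 * Real.sqrt (g (𝔭 t) + bankDelta a b 𝔥 - a))) t :=
    hinner.sqrt (by positivity)
  have hρsq : ρ t ^ 2 = g (𝔭 t) + bankDelta a b 𝔥 - a := Real.sq_sqrt hu.le
  have hρpos : 0 < ρ t := Real.sqrt_pos.mpr hu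
  have hderiv : deriv ρ t = (deriv g (𝔭 t) * (1 / (g (𝔭 t) + bankDelta a b 𝔥))) /
      (2 * Real.sqrt (g (𝔭 t) + bankDelta a b 𝔥 - a)) := hsq.deriv
  have key : ρ t * deriv ρ t = deriv g (𝔭 t) / (2 * (g (𝔭 t) + bankDelta a b 𝔥)) := by
    rw [hderiv]
    have : ρ t = Real.sqrt (g (𝔭 t) + bankDelta a b 𝔥 - a) := rfl
    field_simp
    ring
  rw [key, hρsq]
  have hode := hgode _ hpI
  have hne : g (𝔭 t) + bankDelta a b 𝔥 ≠ 0 := ne_of_gt hua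
  exact bank_aux a b 𝔥 (g (𝔭 t)) (deriv g (𝔭 t)) hne hode
end

section
/- (Momentum formula of Theorem 1, verification form.) Fix a > b > 0, 𝔥 > 0 and E > 0, and set γ² = E·𝔥. Let δ, α, β be the bank constants and let g : I → ℝ be differentiable with g′(p)² = 4g(p)³ − αg(p) − β and g(p) + δ − a > 0 for all p ∈ I. Then for every p ∈ I, the quantities ρ := √(g(p) + δ − a) and u := −(1/2)·√E·g′(p)/((g(p) + δ − a + b)·√(g(p) + δ − a)) satisfy the energy relation (u² + γ²/ρ²)·(ρ² + b)/(ρ² + a) = E; that is, the momentum formula of Theorem 1 (with E = (ξ² + b)/(ξ² + a)) is consistent with conservation of the Hamiltonian ℋ = √(u² + γ²/ρ²)·√((ρ² + b)/(ρ² + a)). -/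
/-!
Writing `S = g + δ − a`, the Weierstrass cubic factors as
`4g³ − αg − β = 4 (S + b) (S (S + a) − 𝔥 (S + b))`. Substituting this for `g′²` in `u²` makes the
energy relation a rational identity in `S`.
-/

theorem bank_cubic_eq (a b 𝔥 x : ℝ) :
    4 * x ^ 3 - bankAlpha a b 𝔥 * x - bankBeta a b 𝔥 =
      4 * (x + bankDelta a b 𝔥 - a + b) *
        ((x + bankDelta a b 𝔥 - a) * (x + bankDelta a b 𝔥) - 𝔥 * (x + bankDelta a b 𝔥 - a + b)) := by
  simp only [bankAlpha, bankBeta, bankDelta]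
  ring

theorem sq_neg_half_mul_sqrt_div {E S b w : ℝ} (hE : 0 ≤ E) (hS : 0 ≤ S) :
    (-(1 / 2) * √E * w / ((S + b) * √S)) ^ 2 = E * w ^ 2 / 4 / ((S + b) ^ 2 * S) := by
  rw [div_pow, mul_pow, mul_pow, mul_pow, Real.sq_sqrt hE, Real.sq_sqrt hS]
  ring

theorem energy_eq_of_sq_eq {E 𝔥 S a b w : ℝ} (hS : 0 < S) (hSb : 0 < S + b) (hSa : 0 < S + a)
    (hw : w ^ 2 = 4 * (S + b) * (S * (S + a) - 𝔥 * (S + b))) :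
    (E * w ^ 2 / 4 / ((S + b) ^ 2 * S) + E * 𝔥 / S) * (S + b) / (S + a) = E := by
  rw [hw]
  field_simp
  ring

theorem bank_momentum_verification_general
    (a b 𝔥 E γ : ℝ) (hb : 0 < b) (hab : b < a) (hE : 0 < E)
    (hγ : γ ^ 2 = E * 𝔥)
    (I : Set ℝ)
    (g : ℝ → ℝ)
    (hgode : ∀ p ∈ I,
      (deriv g p) ^ 2 = 4 * (g p) ^ 3 - bankAlpha a b 𝔥 * g p - bankBeta a b 𝔥)
    (hgpos : ∀ p ∈ I, 0 < g p + bankDelta a b 𝔥 - a) :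
    ∀ p ∈ I,
      let ρ : ℝ := Real.sqrt (g p + bankDelta a b 𝔥 - a)
      let u : ℝ := -(1 / 2) * Real.sqrt E * deriv g p
        / ((g p + bankDelta a b 𝔥 - a + b) * Real.sqrt (g p + bankDelta a b 𝔥 - a))
      (u ^ 2 + γ ^ 2 / ρ ^ 2) * (ρ ^ 2 + b) / (ρ ^ 2 + a) = E := by
  intro p hp ρ u
  have hS := hgpos p hp
  have hw := (hgode p hp).trans (bank_cubic_eq a b 𝔥 (g p))
  simp only [ρ, u]
  rw [sq_neg_half_mul_sqrt_div hE.le hS.le, Real.sq_sqrt hS.le, hγ]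
  exact energy_eq_of_sq_eq hS (by linarith) (by linarith) (by linear_combination hw)

/-- (Momentum formula of Theorem 1, verification form.)
Fix `a > b > 0`, `𝔥 > 0`, `E > 0`, set `γ² = E·𝔥`, and let `δ, α, β` be the
bank constants.  Let `g : I → ℝ` be differentiable with
`g′(p)² = 4g(p)³ − αg(p) − β` and `g(p) + δ − a > 0` on `I`.  Then for every
`p ∈ I`, the quantities `ρ := √(g(p) + δ − a)` and
`u := −(1/2)·√E·g′(p)/((g(p) + δ − a + b)·√(g(p) + δ − a))` satisfy the
energy relation `(u² + γ²/ρ²)·(ρ² + b)/(ρ² + a) = E`. -/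
theorem bank_momentum_verification
    (a b 𝔥 E γ : ℝ) (hb : 0 < b) (hab : b < a) (h𝔥 : 0 < 𝔥) (hE : 0 < E)
    (hγ : γ ^ 2 = E * 𝔥)
    (I : Set ℝ) (hI : I.OrdConnected)
    (g : ℝ → ℝ)
    (hgdiff : ∀ p ∈ I, DifferentiableAt ℝ g p)
    (hgode : ∀ p ∈ I,
      (deriv g p) ^ 2 = 4 * (g p) ^ 3 - bankAlpha a b 𝔥 * g p - bankBeta a b 𝔥)
    (hgpos : ∀ p ∈ I, 0 < g p + bankDelta a b 𝔥 - a) :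
    ∀ p ∈ I,
      let ρ : ℝ := Real.sqrt (g p + bankDelta a b 𝔥 - a)
      let u : ℝ := -(1 / 2) * Real.sqrt E * deriv g p
        / ((g p + bankDelta a b 𝔥 - a + b) * Real.sqrt (g p + bankDelta a b 𝔥 - a))
      (u ^ 2 + γ ^ 2 / ρ ^ 2) * (ρ ^ 2 + b) / (ρ ^ 2 + a) = E :=
  bank_momentum_verification_general a b 𝔥 E γ hb hab hE hγ I g hgode hgpos
end

section
/- Let t ↦ (x₁(t), x₂(t), p₁(t), p₂(t)) be a solution of the Hamiltonian system with the underwater-ridge Hamiltonian on which p₂(t) ≡ γ and ℋ² ≡ E for constants γ and E with E > γ² ≥ 0, and set 𝔥 = E/(E − γ²). Then for every t the variable x₁ satisfies the autonomous equation (x₁(t)·ẋ₁(t))²·(x₁(t)² + a)² = (1/𝔥)·x₁(t)²·(x₁(t)² + b)·(x₁(t)² + a + (𝔥 − 1)(a − b)). -/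
open Real

/-- The underwater-ridge Hamiltonian
`ℋ(x₁, x₂, p₁, p₂) = √(p₁² + p₂²) · √((x₁² + b)/(x₁² + a))`. -/
noncomputable def ridgeH (a b x₁ x₂ p₁ p₂ : ℝ) : ℝ :=
  Real.sqrt (p₁ ^ 2 + p₂ ^ 2) * Real.sqrt ((x₁ ^ 2 + b) / (x₁ ^ 2 + a))

/- On the level set `ℋ² = E` with `p₂ = γ`, the energy relation `(p₁² + γ²)(x₁² + b) = E (x₁² + a)`
expresses `p₁²` through `x₁` alone, and `ẋ₁ = ∂ℋ/∂p₁ = p₁ ℋ / (p₁² + p₂²)`; substituting the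
first into the square of the second eliminates `p₁` and leaves an equation in `x₁` and `ẋ₁`. -/

theorem ridgeH_sq (a b x₁ x₂ p₁ p₂ : ℝ) (ha : 0 ≤ a) (hb : 0 ≤ b) :
    ridgeH a b x₁ x₂ p₁ p₂ ^ 2 = (p₁ ^ 2 + p₂ ^ 2) * ((x₁ ^ 2 + b) / (x₁ ^ 2 + a)) := by
  rw [ridgeH, mul_pow, sq_sqrt (by positivity), sq_sqrt (by positivity)]

theorem hasDerivAt_ridgeH_p₁ (a b x₁ x₂ p₁ p₂ : ℝ) (hp : p₁ ^ 2 + p₂ ^ 2 ≠ 0) :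
    HasDerivAt (fun q => ridgeH a b x₁ x₂ q p₂)
      (p₁ / (p₁ ^ 2 + p₂ ^ 2) * ridgeH a b x₁ x₂ p₁ p₂) p₁ := by
  have hnorm : HasDerivAt (fun q : ℝ => √(q ^ 2 + p₂ ^ 2))
      (1 / (2 * √(p₁ ^ 2 + p₂ ^ 2)) * (2 * p₁)) p₁ :=
    (hasDerivAt_sqrt hp).comp p₁ (by simpa using (hasDerivAt_pow 2 p₁).add_const (p₂ ^ 2))
  have hs : 0 < √(p₁ ^ 2 + p₂ ^ 2) := sqrt_pos.2 (lt_of_le_of_ne (by positivity) hp.symm)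
  refine (hnorm.mul_const (√((x₁ ^ 2 + b) / (x₁ ^ 2 + a)))).congr_deriv ?_
  rw [ridgeH]
  field_simp
  rw [sq_sqrt (by positivity)]

theorem ridge_autonomous_of_energy (a b X P γ E : ℝ) (hE : E ≠ 0) (hEγ : E - γ ^ 2 ≠ 0)
    (ha : X ^ 2 + a ≠ 0) (hb : X ^ 2 + b ≠ 0)
    (henergy : (P ^ 2 + γ ^ 2) * (X ^ 2 + b) = E * (X ^ 2 + a)) :
    (X * (P / (P ^ 2 + γ ^ 2))) ^ 2 * E * (X ^ 2 + a) ^ 2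
      = 1 / (E / (E - γ ^ 2)) * X ^ 2 * (X ^ 2 + b)
          * (X ^ 2 + a + (E / (E - γ ^ 2) - 1) * (a - b)) := by
  have hnorm : P ^ 2 + γ ^ 2 = E * (X ^ 2 + a) / (X ^ 2 + b) := by
    rw [eq_div_iff hb, henergy]
  have hP : P ^ 2 = (E * (X ^ 2 + a) - γ ^ 2 * (X ^ 2 + b)) / (X ^ 2 + b) := by
    rw [eq_div_iff hb]; linarith
  rw [mul_pow, div_pow, hnorm, hP]
  field_simp
  ring

theorem ridge_x1_autonomous_equation_general
    (a b : ℝ) (hb : 0 < b) (hab : b < a)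
    (γ E : ℝ) (hγE : γ ^ 2 < E)
    (x₁ x₂ p₁ p₂ : ℝ → ℝ)
    (hx₁ : ∀ t, HasDerivAt x₁ (deriv (fun q => ridgeH a b (x₁ t) (x₂ t) q (p₂ t)) (p₁ t)) t)
    (hp₂const : ∀ t, p₂ t = γ)
    (hHconst : ∀ t, (ridgeH a b (x₁ t) (x₂ t) (p₁ t) (p₂ t)) ^ 2 = E)
    (𝔥 : ℝ) (h𝔥 : 𝔥 = E / (E - γ ^ 2)) :
    ∀ t : ℝ,
      (x₁ t * deriv x₁ t) ^ 2 * (x₁ t ^ 2 + a) ^ 2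
        = (1 / 𝔥) * x₁ t ^ 2 * (x₁ t ^ 2 + b) * (x₁ t ^ 2 + a + (𝔥 - 1) * (a - b)) := by
  intro t
  have hE : 0 < E := lt_of_le_of_lt (sq_nonneg γ) hγE
  have ha : 0 < a := hb.trans hab
  have hxa : 0 < x₁ t ^ 2 + a := by positivity
  have hxb : 0 < x₁ t ^ 2 + b := by positivity
  have henergy : (p₁ t ^ 2 + γ ^ 2) * ((x₁ t ^ 2 + b) / (x₁ t ^ 2 + a)) = E := by
    rw [← hp₂const t, ← ridgeH_sq _ _ _ (x₂ t) _ _ ha.le hb.le, hHconst t]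
  have hp : p₁ t ^ 2 + p₂ t ^ 2 ≠ 0 := by
    rintro h
    rw [← hp₂const t, h, zero_mul] at henergy
    exact hE.ne henergy
  have hvel : deriv x₁ t = p₁ t / (p₁ t ^ 2 + γ ^ 2) * ridgeH a b (x₁ t) (x₂ t) (p₁ t) (p₂ t) := by
    rw [(hx₁ t).deriv, (hasDerivAt_ridgeH_p₁ _ _ _ _ _ _ hp).deriv, hp₂const t]
  rw [hvel, ← mul_assoc, mul_pow, hHconst t, h𝔥]
  refine ridge_autonomous_of_energy a b _ _ γ E hE.ne' (by linarith) hxa.ne' hxb.ne' ?_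
  rw [← henergy]
  field_simp

/-- On a solution of the underwater-ridge Hamiltonian
system with `p₂ ≡ γ` and `ℋ² ≡ E` (`E > γ² ≥ 0`, `𝔥 = E/(E − γ²)`), the
variable `x₁` satisfies the autonomous equation
`(x₁·ẋ₁)²·(x₁² + a)² = (1/𝔥)·x₁²·(x₁² + b)·(x₁² + a + (𝔥 − 1)(a − b))`. -/
theorem ridge_x1_autonomous_equation
    (a b : ℝ) (hb : 0 < b) (hab : b < a)
    (γ E : ℝ) (hγE : γ ^ 2 < E)
    (x₁ x₂ p₁ p₂ : ℝ → ℝ)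
    (hne : ∀ t, (p₁ t, p₂ t) ≠ (0, 0))
    (hx₁ : ∀ t, HasDerivAt x₁ (deriv (fun q => ridgeH a b (x₁ t) (x₂ t) q (p₂ t)) (p₁ t)) t)
    (hx₂ : ∀ t, HasDerivAt x₂ (deriv (fun q => ridgeH a b (x₁ t) (x₂ t) (p₁ t) q) (p₂ t)) t)
    (hp₁ : ∀ t, HasDerivAt p₁ (-(deriv (fun y => ridgeH a b y (x₂ t) (p₁ t) (p₂ t)) (x₁ t))) t)
    (hp₂ : ∀ t, HasDerivAt p₂ (-(deriv (fun y => ridgeH a b (x₁ t) y (p₁ t) (p₂ t)) (x₂ t))) t)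
    (hp₂const : ∀ t, p₂ t = γ)
    (hHconst : ∀ t, (ridgeH a b (x₁ t) (x₂ t) (p₁ t) (p₂ t)) ^ 2 = E)
    (𝔥 : ℝ) (h𝔥 : 𝔥 = E / (E - γ ^ 2)) :
    ∀ t : ℝ,
      (x₁ t * deriv x₁ t) ^ 2 * (x₁ t ^ 2 + a) ^ 2
        = (1 / 𝔥) * x₁ t ^ 2 * (x₁ t ^ 2 + b) * (x₁ t ^ 2 + a + (𝔥 - 1) * (a - b)) :=
  ridge_x1_autonomous_equation_general a b hb hab γ E hγE x₁ x₂ p₁ p₂ hx₁ hp₂const hHconst 𝔥 h𝔥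
end
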